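/- Let T be a finite tree with at least one edge and v a vertex of T with degree d_T(v) ≤ 2. Let T' be the tree obtained from T by attaching one new pendant edge at v. Then λ_max(R_{T'}) ≥ λ_max(R_T). -/

import Mathlib

open SimpleGraph Matrix Finset

/-- The largest eigenvalue of a real matrix, defined as the supremum of its set of
real eigenvalues. -/
noncomputable def lambdaMax {n : Type*} [Fintype n] (M : Matrix n n ℝ) : ℝ :=
  sSup {μ : ℝ | ∃ x : n → ℝ, x ≠ 0 ∧ M.mulVec x = μ • x}

/-- The Ricci matrix of a graph: `(R)_{e,e} = -(1/d_x + 1/d_y)` for `e = {x,y}`,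
`(R)_{e,e'} = 1/d_z` for distinct edges sharing the endpoint `z`, and `0` for
disjoint edges. -/
noncomputable def ricciMatrix {V : Type*} [Fintype V] [DecidableEq V]
    (G : SimpleGraph V) [DecidableRel G.Adj] :
    Matrix G.edgeSet G.edgeSet ℝ := fun e e' =>
  (if e = e' then (-1 : ℝ) else 1) *
    ∑ z : V, (if z ∈ (e : Sym2 V) ∧ z ∈ (e' : Sym2 V) then ((G.degree z : ℝ))⁻¹ else 0)

/-- Adjacency for the tree obtained by attaching `k` new pendant vertices at `v`. -/
def addLeavesAdj {V : Type*} (G : SimpleGraph V) (v : V) (k : ℕ) :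
    V ⊕ Fin k → V ⊕ Fin k → Prop
  | Sum.inl x, Sum.inl y => G.Adj x y
  | Sum.inl x, Sum.inr _ => x = v
  | Sum.inr _, Sum.inl y => y = v
  | Sum.inr _, Sum.inr _ => False

/-- The tree obtained from `G` by attaching `k` new pendant edges at `v`:
`k` new vertices `Sum.inr i`, each joined to `v` by a new edge. -/
def addLeaves {V : Type*} (G : SimpleGraph V) (v : V) (k : ℕ) :
    SimpleGraph (V ⊕ Fin k) where
  Adj := addLeavesAdj G v k
  symm := by
    constructor
    intro a b h
    cases a <;> cases b <;> simp_all [addLeavesAdj] <;> exact h.symm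
  loopless := by
    constructor
    intro a
    cases a <;> simp [addLeavesAdj]

instance {V : Type*} [DecidableEq V] (G : SimpleGraph V) [DecidableRel G.Adj]
    (v : V) (k : ℕ) : DecidableRel (addLeaves G v k).Adj := fun a b =>
  match a, b with
  | Sum.inl x, Sum.inl y => inferInstanceAs (Decidable (G.Adj x y))
  | Sum.inl x, Sum.inr _ => inferInstanceAs (Decidable (x = v))
  | Sum.inr _, Sum.inl y => inferInstanceAs (Decidable (y = v))
  | Sum.inr _, Sum.inr _ => inferInstanceAs (Decidable False)

/-- The extension `f_y` of an edge function `f` on `G` to `addLeaves G v 1`: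
it agrees with `f` on (the images of) old edges and takes the value `y` on the new
pendant edge. -/
noncomputable def extendLeaf {V : Type*} [Fintype V] [DecidableEq V]
    (G : SimpleGraph V) [DecidableRel G.Adj] (v : V) (f : G.edgeSet → ℝ) (y : ℝ) :
    (addLeaves G v 1).edgeSet → ℝ := fun e =>
  if h : ∃ e₀ : G.edgeSet, Sym2.map Sum.inl (e₀ : Sym2 V) = (e : Sym2 (V ⊕ Fin 1))
  then f h.choose else y

/-!
For symmetric `A`, `λ_max A` is the top of the Rayleigh quotient and is attained by an eigenvector.
So it suffices to extend an eigenvector `f` of `R_T` by `0` on the new edge, which keeps `f ⬝ᵥ f`,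
without decreasing the quadratic form. Writing `x_z = ∑_{e ∋ z} x_e`,
`x ⬝ᵥ R x = ∑_z d_z⁻¹ * (x_z ^ 2 - 2 * ∑_{e ∋ z} x_e ^ 2)`,
and the extension changes only the coefficient at `v`, from `d_v⁻¹` to `(d_v + 1)⁻¹`.
By Cauchy–Schwarz the bracket at `v` is at most `(d_v - 2) * ∑_{e ∋ v} x_e ^ 2 ≤ 0` when `d_v ≤ 2`,
so this term can only grow.
-/

lemma dotProduct_self_pos_of_ne_zero {n : Type*} [Fintype n] {x : n → ℝ} (hx : x ≠ 0) :
    0 < x ⬝ᵥ x := by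
  simpa using dotProduct_star_self_pos_iff.mpr hx

section Rayleigh
variable {m n : Type*} [Fintype n] [DecidableEq n]

noncomputable def Matrix.rayleighSup (M : Matrix n n ℝ) : ℝ :=
  ⨆ y : {y : EuclideanSpace ℝ n // y ≠ 0}, (toEuclideanCLM (𝕜 := ℝ) M).rayleighQuotient y

lemma rayleighQuotient_toEuclideanCLM_toLp (M : Matrix n n ℝ) (x : n → ℝ) :
    (toEuclideanCLM (𝕜 := ℝ) M).rayleighQuotient (WithLp.toLp 2 x) = x ⬝ᵥ M *ᵥ x / x ⬝ᵥ x := by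
  rw [ContinuousLinearMap.rayleighQuotient, ContinuousLinearMap.reApplyInnerSelf_apply,
    ← real_inner_self_eq_norm_sq, toEuclideanCLM_toLp, EuclideanSpace.inner_toLp_toLp,
    EuclideanSpace.inner_toLp_toLp]
  simp only [RCLike.re_to_real, star_trivial]

lemma dotProduct_mulVec_le_rayleighSup_mul (M : Matrix n n ℝ) (x : n → ℝ) :
    x ⬝ᵥ M *ᵥ x ≤ M.rayleighSup * x ⬝ᵥ x := by
  rcases eq_or_ne x 0 with rfl | hx
  · simp
  set T := toEuclideanCLM (𝕜 := ℝ) M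
  have hbdd : BddAbove (Set.range fun y : {y : EuclideanSpace ℝ n // y ≠ 0} =>
      T.rayleighQuotient y) :=
    ⟨‖T‖, by rintro _ ⟨y, rfl⟩; exact (le_abs_self _).trans (T.rayleighQuotient_le_norm y)⟩
  rw [← div_le_iff₀ (dotProduct_self_pos_of_ne_zero hx), ← rayleighQuotient_toEuclideanCLM_toLp]
  exact le_ciSup hbdd ⟨_, by simpa using hx⟩

namespace Matrix.IsSymm
variable {M : Matrix n n ℝ}

lemma exists_mulVec_eq_rayleighSup_smul [Nonempty n] (hM : M.IsSymm) :
    ∃ x ≠ 0, M *ᵥ x = M.rayleighSup • x := by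
  obtain ⟨y, hMy, hy⟩ := (isSymmetric_toEuclideanLin_iff.mpr hM
    ).hasEigenvalue_iSup_of_finiteDimensional.exists_hasEigenvector
  exact ⟨WithLp.ofLp y, by simpa using hy,
    congrArg WithLp.ofLp (Module.End.mem_eigenspace_iff.mp hMy)⟩

lemma lambdaMax_eq_rayleighSup [Nonempty n] (hM : M.IsSymm) : lambdaMax M = M.rayleighSup := by
  refine IsGreatest.csSup_eq ⟨hM.exists_mulVec_eq_rayleighSup_smul, ?_⟩
  rintro μ ⟨x, hx, hMx⟩
  have hμ := dotProduct_mulVec_le_rayleighSup_mul M x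
  rw [hMx, dotProduct_smul, smul_eq_mul] at hμ
  exact le_of_mul_le_mul_right hμ (dotProduct_self_pos_of_ne_zero hx)

lemma exists_mulVec_eq_lambdaMax_smul [Nonempty n] (hM : M.IsSymm) :
    ∃ x ≠ 0, M *ᵥ x = lambdaMax M • x :=
  hM.lambdaMax_eq_rayleighSup ▸ hM.exists_mulVec_eq_rayleighSup_smul

lemma dotProduct_mulVec_le_lambdaMax_mul (hM : M.IsSymm) (x : n → ℝ) :
    x ⬝ᵥ M *ᵥ x ≤ lambdaMax M * x ⬝ᵥ x := by
  cases isEmpty_or_nonempty n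
  · simp [dotProduct]
  rw [hM.lambdaMax_eq_rayleighSup]
  exact dotProduct_mulVec_le_rayleighSup_mul M x

end Matrix.IsSymm

theorem lambdaMax_le_lambdaMax_of_dotProduct_mulVec_le [Fintype m] [DecidableEq m] [Nonempty m]
    {A : Matrix m m ℝ} {B : Matrix n n ℝ} (hA : A.IsSymm) (hB : B.IsSymm)
    (φ : (m → ℝ) → n → ℝ) (hφ : ∀ x, φ x ⬝ᵥ φ x = x ⬝ᵥ x)
    (hAB : ∀ x, x ⬝ᵥ A *ᵥ x ≤ φ x ⬝ᵥ B *ᵥ φ x) :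
    lambdaMax A ≤ lambdaMax B := by
  obtain ⟨x, hx, hAx⟩ := hA.exists_mulVec_eq_lambdaMax_smul
  refine le_of_mul_le_mul_right ?_ (dotProduct_self_pos_of_ne_zero hx)
  calc lambdaMax A * x ⬝ᵥ x = x ⬝ᵥ A *ᵥ x := by rw [hAx, dotProduct_smul, smul_eq_mul]
    _ ≤ φ x ⬝ᵥ B *ᵥ φ x := hAB x
    _ ≤ lambdaMax B * φ x ⬝ᵥ φ x := hB.dotProduct_mulVec_le_lambdaMax_mul (φ x)
    _ = lambdaMax B * x ⬝ᵥ x := by rw [hφ]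

end Rayleigh

def starForm {ι : Type*} (s : Finset ι) (x : ι → ℝ) : ℝ :=
  (∑ e ∈ s, x e) ^ 2 - 2 * ∑ e ∈ s, x e ^ 2

lemma starForm_nonpos {ι : Type*} {s : Finset ι} (hs : #s ≤ 2) (x : ι → ℝ) :
    starForm s x ≤ 0 := by
  have hsq : 0 ≤ ∑ e ∈ s, x e ^ 2 := Finset.sum_nonneg fun e _ => sq_nonneg (x e)
  have hs' : (#s : ℝ) ≤ 2 := by exact_mod_cast hs
  rw [starForm, sub_nonpos]
  exact (sq_sum_le_card_mul_sum_sq).trans (mul_le_mul_of_nonneg_right hs' hsq)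

lemma inv_card_mul_starForm_le {ι : Type*} {s : Finset ι} (hs : #s ≤ 2) (x : ι → ℝ) :
    (#s : ℝ)⁻¹ * starForm s x ≤ (#s + 1 : ℝ)⁻¹ * starForm s x := by
  rcases s.eq_empty_or_nonempty with rfl | hne
  · simp [starForm]
  have hcard : (0 : ℝ) < #s := by exact_mod_cast hne.card_pos
  exact mul_le_mul_of_nonpos_right (inv_anti₀ hcard (by linarith)) (starForm_nonpos hs x)

namespace SimpleGraph
variable {W : Type*} [Fintype W] [DecidableEq W] (H : SimpleGraph W) [DecidableRel H.Adj]

def incidentEdges (z : W) : Finset H.edgeSet := {e | z ∈ (e : Sym2 W)}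

lemma card_incidentEdges (z : W) : #(H.incidentEdges z) = H.degree z := by
  rw [← card_incidenceFinset_eq_degree, incidenceFinset_eq_filter, incidentEdges,
    ← Finset.card_map (Function.Embedding.subtype _)]
  congr 1
  ext e
  simp [and_comm]

def incidenceVec (z : W) : H.edgeSet → ℝ := fun e => if z ∈ (e : Sym2 W) then 1 else 0

lemma incidenceVec_dotProduct (z : W) (x : H.edgeSet → ℝ) :
    H.incidenceVec z ⬝ᵥ x = ∑ e ∈ H.incidentEdges z, x e := by
  simp [dotProduct, incidenceVec, incidentEdges, Finset.sum_filter]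

lemma ricciMatrix_eq_sum : ricciMatrix H = ∑ z, (H.degree z : ℝ)⁻¹ •
    (vecMulVec (H.incidenceVec z) (H.incidenceVec z) - (2 : ℝ) • diagonal (H.incidenceVec z)) := by
  ext e e'
  simp only [ricciMatrix, Matrix.sum_apply, Matrix.smul_apply, Matrix.sub_apply, vecMulVec_apply,
    diagonal_apply, incidenceVec, Finset.mul_sum]
  refine Finset.sum_congr rfl fun z _ => ?_
  split_ifs <;> simp_all
  ring

lemma dotProduct_ricciMatrix_mulVec (x : H.edgeSet → ℝ) :
    x ⬝ᵥ ricciMatrix H *ᵥ x = ∑ z, (H.degree z : ℝ)⁻¹ * starForm (H.incidentEdges z) x := by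
  rw [ricciMatrix_eq_sum, sum_mulVec, dotProduct_sum]
  refine Finset.sum_congr rfl fun z _ => ?_
  have hdiag : x ⬝ᵥ diagonal (H.incidenceVec z) *ᵥ x = H.incidenceVec z ⬝ᵥ (x ^ 2) := by
    simp only [dotProduct, mulVec_diagonal, Pi.pow_apply]
    exact Finset.sum_congr rfl fun e _ => by ring
  rw [smul_mulVec, sub_mulVec, smul_mulVec, vecMulVec_mulVec, dotProduct_smul, dotProduct_sub,
    dotProduct_smul, dotProduct_smul, hdiag,
    dotProduct_comm x, incidenceVec_dotProduct, incidenceVec_dotProduct, starForm]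
  simp only [op_smul_eq_smul, smul_eq_mul, Pi.pow_apply]
  ring

lemma ricciMatrix_isSymm : (ricciMatrix H).IsSymm := by
  ext e e'
  simp only [Matrix.transpose_apply, ricciMatrix]
  by_cases h : e = e'
  · subst h; rfl
  · rw [if_neg h, if_neg fun he => h he.symm]
    congr 1
    exact Finset.sum_congr rfl fun z _ => if_congr and_comm rfl rfl

end SimpleGraph

section AddLeaves
variable {V : Type*} (G : SimpleGraph V) (v : V) (k : ℕ)

def addLeavesOldEdge (e : G.edgeSet) : (addLeaves G v k).edgeSet :=
  ⟨Sym2.map Sum.inl e, by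
    obtain ⟨e, he⟩ := e
    induction e using Sym2.ind with
    | h a b => exact he⟩

def addLeavesNewEdge (i : Fin k) : (addLeaves G v k).edgeSet :=
  ⟨s(Sum.inl v, Sum.inr i), rfl⟩

variable {G v k}

lemma inl_mem_addLeavesOldEdge {w : V} {e : G.edgeSet} :
    Sum.inl w ∈ (addLeavesOldEdge G v k e : Sym2 (V ⊕ Fin k)) ↔ w ∈ (e : Sym2 V) := by
  simp [addLeavesOldEdge, Sym2.mem_map]

lemma inr_notMem_addLeavesOldEdge {j : Fin k} {e : G.edgeSet} :
    Sum.inr j ∉ (addLeavesOldEdge G v k e : Sym2 (V ⊕ Fin k)) := by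
  simp [addLeavesOldEdge, Sym2.mem_map]

lemma inl_mem_addLeavesNewEdge {w : V} {i : Fin k} :
    Sum.inl w ∈ (addLeavesNewEdge G v k i : Sym2 (V ⊕ Fin k)) ↔ w = v := by
  simp [addLeavesNewEdge]

lemma inr_mem_addLeavesNewEdge {i j : Fin k} :
    Sum.inr j ∈ (addLeavesNewEdge G v k i : Sym2 (V ⊕ Fin k)) ↔ j = i := by
  simp [addLeavesNewEdge]

lemma addLeavesEdge_bijective :
    Function.Bijective (Sum.elim (addLeavesOldEdge G v k) (addLeavesNewEdge G v k)) := by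
  constructor
  · rintro (e | i) (e' | i') h <;> simp only [Sum.elim_inl, Sum.elim_inr] at h
    · exact congrArg Sum.inl
        (Subtype.ext (Sym2.map.injective Sum.inl_injective (congrArg Subtype.val h)))
    · exact absurd (h ▸ inr_mem_addLeavesNewEdge.mpr rfl) inr_notMem_addLeavesOldEdge
    · exact absurd (h ▸ inr_mem_addLeavesNewEdge.mpr rfl) inr_notMem_addLeavesOldEdge
    · exact congrArg Sum.inr (inr_mem_addLeavesNewEdge.mp (h ▸ inr_mem_addLeavesNewEdge.mpr rfl))
  · rintro ⟨e, he⟩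
    induction e using Sym2.ind with
    | h a b =>
      rcases a with x | i <;> rcases b with y | j
      · exact ⟨Sum.inl ⟨s(x, y), he⟩, rfl⟩
      · obtain rfl : x = v := he
        exact ⟨Sum.inr j, rfl⟩
      · obtain rfl : y = v := he
        exact ⟨Sum.inr i, Subtype.ext Sym2.eq_swap⟩
      · exact he.elim

variable [Fintype V] [DecidableEq V] [DecidableRel G.Adj]

lemma sum_edgeSet_addLeaves {M : Type*} [AddCommMonoid M] (F : (addLeaves G v k).edgeSet → M) :
    ∑ e, F e = ∑ e, F (addLeavesOldEdge G v k e) + ∑ i, F (addLeavesNewEdge G v k i) := by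
  rw [← Fintype.sum_bijective _ addLeavesEdge_bijective _ F (fun _ => rfl), Fintype.sum_sum_type]
  rfl

lemma sum_incidentEdges_addLeaves_inl {M : Type*} [AddCommMonoid M] (w : V)
    (F : (addLeaves G v k).edgeSet → M) :
    ∑ e ∈ (addLeaves G v k).incidentEdges (Sum.inl w), F e =
      ∑ e ∈ G.incidentEdges w, F (addLeavesOldEdge G v k e) +
        if w = v then ∑ i, F (addLeavesNewEdge G v k i) else 0 := by
  simp only [SimpleGraph.incidentEdges, Finset.sum_filter, sum_edgeSet_addLeaves,
    inl_mem_addLeavesOldEdge, inl_mem_addLeavesNewEdge]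
  split_ifs <;> simp

lemma sum_incidentEdges_addLeaves_inr {M : Type*} [AddCommMonoid M] (j : Fin k)
    (F : (addLeaves G v k).edgeSet → M) :
    ∑ e ∈ (addLeaves G v k).incidentEdges (Sum.inr j), F e = F (addLeavesNewEdge G v k j) := by
  simp [SimpleGraph.incidentEdges, Finset.sum_filter, sum_edgeSet_addLeaves,
    inr_notMem_addLeavesOldEdge, inr_mem_addLeavesNewEdge]

lemma degree_addLeaves_inl (w : V) :
    (addLeaves G v k).degree (Sum.inl w) = G.degree w + if w = v then k else 0 := by
  rw [← SimpleGraph.card_incidentEdges, ← SimpleGraph.card_incidentEdges, Finset.card_eq_sum_ones,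
    sum_incidentEdges_addLeaves_inl, ← Finset.card_eq_sum_ones]
  simp

end AddLeaves

section ExtendLeaf
variable {V : Type*} [Fintype V] [DecidableEq V] {G : SimpleGraph V} [DecidableRel G.Adj] {v : V}

lemma extendLeaf_addLeavesOldEdge (f : G.edgeSet → ℝ) (y : ℝ) (e : G.edgeSet) :
    extendLeaf G v f y (addLeavesOldEdge G v 1 e) = f e := by
  have h : ∃ e₀ : G.edgeSet, Sym2.map Sum.inl (e₀ : Sym2 V) =
      (addLeavesOldEdge G v 1 e : Sym2 (V ⊕ Fin 1)) :=
    ⟨e, rfl⟩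
  rw [extendLeaf, dif_pos h]
  exact congrArg f (Subtype.ext (Sym2.map.injective Sum.inl_injective h.choose_spec))

lemma extendLeaf_addLeavesNewEdge (f : G.edgeSet → ℝ) (y : ℝ) (i : Fin 1) :
    extendLeaf G v f y (addLeavesNewEdge G v 1 i) = y := by
  rw [extendLeaf, dif_neg]
  rintro ⟨e₀, he₀⟩
  exact inr_notMem_addLeavesOldEdge (v := v) (e := e₀) (he₀ ▸ inr_mem_addLeavesNewEdge.mpr rfl)

lemma dotProduct_extendLeaf_zero (f : G.edgeSet → ℝ) :
    extendLeaf G v f 0 ⬝ᵥ extendLeaf G v f 0 = f ⬝ᵥ f := by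
  simp [dotProduct, sum_edgeSet_addLeaves, extendLeaf_addLeavesOldEdge,
    extendLeaf_addLeavesNewEdge]

lemma starForm_incidentEdges_inl_extendLeaf_zero (f : G.edgeSet → ℝ) (w : V) :
    starForm ((addLeaves G v 1).incidentEdges (Sum.inl w)) (extendLeaf G v f 0) =
      starForm (G.incidentEdges w) f := by
  simp [starForm, sum_incidentEdges_addLeaves_inl, extendLeaf_addLeavesOldEdge,
    extendLeaf_addLeavesNewEdge]

lemma starForm_incidentEdges_inr_extendLeaf_zero (f : G.edgeSet → ℝ) (j : Fin 1) :
    starForm ((addLeaves G v 1).incidentEdges (Sum.inr j)) (extendLeaf G v f 0) = 0 := by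
  simp [starForm, sum_incidentEdges_addLeaves_inr, extendLeaf_addLeavesNewEdge]

theorem dotProduct_ricciMatrix_mulVec_le_extendLeaf_zero (hdeg : G.degree v ≤ 2)
    (f : G.edgeSet → ℝ) :
    f ⬝ᵥ ricciMatrix G *ᵥ f ≤
      extendLeaf G v f 0 ⬝ᵥ ricciMatrix (addLeaves G v 1) *ᵥ extendLeaf G v f 0 := by
  rw [SimpleGraph.dotProduct_ricciMatrix_mulVec, SimpleGraph.dotProduct_ricciMatrix_mulVec,
    Fintype.sum_sum_type]
  simp only [starForm_incidentEdges_inl_extendLeaf_zero, starForm_incidentEdges_inr_extendLeaf_zero,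
    degree_addLeaves_inl, mul_zero, Finset.sum_const_zero, add_zero]
  refine Finset.sum_le_sum fun w _ => ?_
  split_ifs with hw
  · subst hw
    rw [← SimpleGraph.card_incidentEdges] at hdeg ⊢
    push_cast
    exact inv_card_mul_starForm_le hdeg f
  · simp

end ExtendLeaf

theorem lambdaMax_mono_of_degree_le_two_general {V : Type*} [Fintype V] [DecidableEq V]
    (G : SimpleGraph V) [DecidableRel G.Adj]
    (h1 : 1 ≤ G.edgeFinset.card) (v : V) (hdeg : G.degree v ≤ 2) :
    lambdaMax (ricciMatrix G) ≤ lambdaMax (ricciMatrix (addLeaves G v 1)) := by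
  have : Nonempty G.edgeSet := by
    obtain ⟨e, he⟩ := Finset.card_pos.mp h1
    exact ⟨⟨e, SimpleGraph.mem_edgeFinset.mp he⟩⟩
  exact lambdaMax_le_lambdaMax_of_dotProduct_mulVec_le G.ricciMatrix_isSymm
    (addLeaves G v 1).ricciMatrix_isSymm (fun f => extendLeaf G v f 0)
    dotProduct_extendLeaf_zero (dotProduct_ricciMatrix_mulVec_le_extendLeaf_zero hdeg)

/-- Attaching a pendant edge at a vertex of degree at most `2` of a finite tree with at
least one edge does not decrease the largest eigenvalue of the Ricci matrix. -/
theorem lambdaMax_mono_of_degree_le_two {V : Type*} [Fintype V] [DecidableEq V]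
    (G : SimpleGraph V) [DecidableRel G.Adj]
    (hT : G.IsTree) (h1 : 1 ≤ G.edgeFinset.card) (v : V) (hdeg : G.degree v ≤ 2) :
    lambdaMax (ricciMatrix G) ≤ lambdaMax (ricciMatrix (addLeaves G v 1)) :=
  lambdaMax_mono_of_degree_le_two_general G h1 v hdeg
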